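/- Let A be a commutative ring, d : A → A a derivation, and f_1, …, f_N ∈ A. For a ∈ A let m_a : A → A denote the multiplication operator x ↦ a·x, and define W_k := e_k(d + m_{f_1}, …, d + m_{f_N})(1) ∈ A for k = 0, …, N, where e_k is the k-th noncommutative elementary symmetric polynomial computed in the ring of additive endomorphisms of A. Then for every additive endomorphism D : A → A satisfying D ∘ m_a − m_a ∘ D = m_{d(a)} for all a ∈ A, and for every m with 1 ≤ m ≤ N, one has the identity of endomorphisms e_m(D + m_{f_1}, …, D + m_{f_N}) = ∑_{k=0}^{m} C(N-k, m-k) · m_{W_k} ∘ D^{m-k}. (This is Lemma 4.3 of the paper — the analogue of Molev's Proposition 12.4.4 — stated for an arbitrary operator D with the same commutation relations with multiplication operators as d; the paper applies it with D = ∂ − H_{(-1)}.) -/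

import Mathlib

/-!
Write `normalSum n w D m = ∑_{k+j=m} C(n-k, j) m_{w k} D^j`, so that the claim reads
`e_m(D + m_{f_1}, …, D + m_{f_N}) = normalSum N W D m`. Induct on the list of the `f_i`, for all
admissible `D` at once. A new factor `D + m_a` multiplies on the right. Its `D` part is absorbed
by Pascal's rule, raising `n` to `n + 1`. Its `m_a` part is moved to the left through `D^j` by the
Leibniz rule `D^j m_a = ∑ C(j,i) m_{d^i a} D^{j-i}`; regrouping yields `normalSum n c D m` with
`c p = (normalSum n W d p) a = e_p(d + m_f)(a)` by the induction hypothesis for `d` itself, and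
since `d 1 = 0` this is exactly the increment of `W_{p+1}` caused by the new factor `d + m_a`.
-/

/-- The `m`-th noncommutative elementary symmetric polynomial of the list
`[X_1, …, X_n]`: the sum over `n ≥ i_1 > i_2 > … > i_m ≥ 1` of
`X_{i_1} X_{i_2} ⋯ X_{i_m}` (factors in strictly decreasing order of index),
with `e_0 = 1`. -/
def ncE {R : Type*} [Semiring R] : ℕ → List R → R
  | 0, _ => 1
  | _ + 1, [] => 0
  | m + 1, x :: xs => ncE (m + 1) xs + ncE m xs * x

/-- The multiplication operator `x ↦ a * x`, as an additive endomorphism. -/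
def mulEnd {A : Type*} [NonUnitalNonAssocSemiring A] (a : A) : AddMonoid.End A :=
  AddMonoidHom.mulLeft a

open Finset

section ncE

variable {R : Type*} [Semiring R]

theorem ncE_zero (L : List R) : ncE 0 L = 1 := by
  cases L <;> rfl

theorem ncE_succ_nil (m : ℕ) : ncE (m + 1) ([] : List R) = 0 := rfl

theorem ncE_succ_cons (m : ℕ) (x : R) (xs : List R) :
    ncE (m + 1) (x :: xs) = ncE (m + 1) xs + ncE m xs * x := rfl

theorem ncE_eq_zero_of_length_lt {L : List R} {m : ℕ} (h : L.length < m) : ncE m L = 0 := by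
  induction L generalizing m with
  | nil => cases m with
    | zero => omega
    | succ m => rfl
  | cons x xs ih =>
    rw [List.length_cons] at h
    cases m with
    | zero => omega
    | succ m => rw [ncE_succ_cons, ih (m := m + 1) (by omega), ih (m := m) (by omega), zero_mul,
        add_zero]

end ncE

theorem Finset.Nat.sum_antidiagonal_antidiagonal_assoc {M : Type*} [AddCommMonoid M] (m : ℕ)
    (f : ℕ → ℕ → ℕ → M) :
    ∑ p ∈ antidiagonal m, ∑ q ∈ antidiagonal p.2, f p.1 q.1 q.2 =
      ∑ p ∈ antidiagonal m, ∑ q ∈ antidiagonal p.1, f q.1 q.2 p.2 := by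
  rw [sum_sigma', sum_sigma']
  refine sum_nbij' (fun x => ⟨(x.1.1 + x.2.1, x.2.2), (x.1.1, x.2.1)⟩)
    (fun x => ⟨(x.2.1, x.2.2 + x.1.2), (x.2.2, x.1.2)⟩) ?_ ?_ ?_ ?_ ?_
  all_goals
    rintro ⟨⟨_, _⟩, ⟨_, _⟩⟩ h
    simp only [mem_sigma, HasAntidiagonal.mem_antidiagonal, Sigma.mk.injEq, Prod.mk.injEq,
      heq_eq_eq, true_and, and_true] at h ⊢ <;> omega

section Semiring

variable {A : Type*} [Semiring A]

theorem mulEnd_apply (a x : A) : mulEnd a x = a * x := rfl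

theorem mulEnd_zero : mulEnd (0 : A) = 0 := map_zero AddMonoid.End.mulLeft

theorem mulEnd_one : mulEnd (1 : A) = 1 := AddMonoidHom.ext one_mul

theorem mulEnd_add (a b : A) : mulEnd (a + b) = mulEnd a + mulEnd b :=
  map_add AddMonoid.End.mulLeft a b

theorem mulEnd_mul (a b : A) : mulEnd (a * b) = mulEnd a * mulEnd b :=
  AddMonoidHom.ext (mul_assoc a b)

theorem mulEnd_nsmul (c : ℕ) (a : A) : mulEnd (c • a) = c • mulEnd a :=
  map_nsmul AddMonoid.End.mulLeft c a

theorem mulEnd_sum {ι : Type*} (s : Finset ι) (g : ι → A) :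
    mulEnd (∑ i ∈ s, g i) = ∑ i ∈ s, mulEnd (g i) :=
  map_sum AddMonoid.End.mulLeft g s

theorem pow_mul_mulEnd {d D : AddMonoid.End A}
    (hD : ∀ b, D * mulEnd b = mulEnd b * D + mulEnd (d b)) (a : A) (j : ℕ) :
    D ^ j * mulEnd a = ∑ p ∈ antidiagonal j, j.choose p.1 • (mulEnd ((d ^ p.1) a) * D ^ p.2) := by
  induction j with
  | zero => simp
  | succ j ih =>
    rw [sum_antidiagonal_choose_succ_nsmul (fun i l => mulEnd ((d ^ i) a) * D ^ l), pow_succ',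
      mul_assoc, ih, mul_sum, ← sum_add_distrib]
    refine sum_congr rfl fun p hp => ?_
    rw [Nat.choose_symm_of_eq_add (HasAntidiagonal.mem_antidiagonal.1 hp).symm, mul_smul_comm,
      ← mul_assoc, hD, add_mul, mul_assoc, ← pow_succ', nsmul_add, pow_succ' d]
    rfl

def normalSum (n : ℕ) (w : ℕ → A) (D : AddMonoid.End A) (m : ℕ) : AddMonoid.End A :=
  ∑ p ∈ antidiagonal m, (n - p.1).choose p.2 • (mulEnd (w p.1) * D ^ p.2)

variable {n : ℕ} {w : ℕ → A} {D : AddMonoid.End A}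

theorem normalSum_apply (m : ℕ) (x : A) :
    normalSum n w D m x = ∑ p ∈ antidiagonal m, (n - p.1).choose p.2 • (w p.1 * (D ^ p.2) x) :=
  AddMonoidHom.finsetSum_apply _ _ _

theorem normalSum_zero : normalSum n w D 0 = mulEnd (w 0) := by
  simp [normalSum]

theorem normalSum_succ_add_normalSum_mul (hw : ∀ k, n < k → w k = 0) (m : ℕ) :
    normalSum n w D (m + 1) + normalSum n w D m * D = normalSum (n + 1) w D (m + 1) := by
  simp only [normalSum, Nat.sum_antidiagonal_succ', sum_mul, add_assoc, ← sum_add_distrib,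
    Nat.choose_zero_right]
  congr 1
  refine sum_congr rfl fun p _ => ?_
  rcases le_or_gt p.1 n with hp | hp
  · rw [Nat.sub_add_comm hp, Nat.choose_succ_succ', add_smul, smul_mul_assoc, mul_assoc,
      ← pow_succ, add_comm]
  · simp [hw _ hp, mulEnd_zero]

theorem normalSum_succ_eq_add {w' c : ℕ → A} (h0 : w' 0 = w 0)
    (hsucc : ∀ k, w' (k + 1) = w (k + 1) + c k) (m : ℕ) :
    normalSum (n + 1) w' D (m + 1) = normalSum (n + 1) w D (m + 1) + normalSum n c D m := by
  simp only [normalSum, Nat.sum_antidiagonal_succ, h0, hsucc, mulEnd_add, add_mul, nsmul_add,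
    sum_add_distrib, Nat.add_sub_add_right]
  abel

theorem normalSum_mul_mulEnd {d : AddMonoid.End A}
    (hD : ∀ b, D * mulEnd b = mulEnd b * D + mulEnd (d b)) (m : ℕ) (a : A) :
    normalSum n w D m * mulEnd a = normalSum n (fun k => normalSum n w d k a) D m := by
  have hchoose (k i l : ℕ) :
      (n - k).choose (i + l) * (i + l).choose i = (n - (k + i)).choose l * (n - k).choose i := by
    rw [Nat.choose_mul (Nat.le_add_right i l), Nat.add_sub_cancel_left, Nat.sub_sub, mul_comm]
  let T (k i l : ℕ) := mulEnd (w k * (d ^ i) a) * D ^ l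
  calc normalSum n w D m * mulEnd a
      = ∑ p ∈ antidiagonal m, ∑ q ∈ antidiagonal p.2,
          ((n - p.1).choose (q.1 + q.2) * (q.1 + q.2).choose q.1) • T p.1 q.1 q.2 := by
        rw [normalSum, sum_mul]
        refine sum_congr rfl fun p _ => ?_
        rw [smul_mul_assoc, mul_assoc, pow_mul_mulEnd hD, mul_sum, ← sum_nsmul]
        refine sum_congr rfl fun q hq => ?_
        rw [HasAntidiagonal.mem_antidiagonal.1 hq, mul_smul_comm, smul_smul, ← mul_assoc,
          ← mulEnd_mul]
    _ = ∑ p ∈ antidiagonal m, ∑ q ∈ antidiagonal p.1,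
          ((n - p.1).choose p.2 * (n - q.1).choose q.2) • T q.1 q.2 p.2 := by
        rw [Finset.Nat.sum_antidiagonal_antidiagonal_assoc m
          (fun k i l => ((n - k).choose (i + l) * (i + l).choose i) • T k i l)]
        refine sum_congr rfl fun p _ => sum_congr rfl fun q hq => ?_
        rw [hchoose, HasAntidiagonal.mem_antidiagonal.1 hq]
    _ = normalSum n (fun k => normalSum n w d k a) D m := by
        rw [normalSum]
        refine sum_congr rfl fun p _ => ?_
        rw [normalSum_apply, mulEnd_sum, sum_mul, ← sum_nsmul]
        refine sum_congr rfl fun q _ => ?_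
        rw [mulEnd_nsmul, smul_mul_assoc, smul_smul]

end Semiring

section Ring

variable {A : Type*} [Ring A] {d : AddMonoid.End A}

theorem apply_one_eq_zero_of_sub_eq_mulEnd
    (hd : ∀ a, d * mulEnd a - mulEnd a * d = mulEnd (d a)) : d 1 = 0 := by
  have h := hd 1
  rw [mulEnd_one, mul_one, one_mul, sub_self] at h
  simpa [mulEnd_apply] using congr($h 1).symm

theorem ncE_map_add_mulEnd_eq_normalSum (hd : ∀ a, d * mulEnd a - mulEnd a * d = mulEnd (d a))
    (L : List A) {D : AddMonoid.End A} (hD : ∀ a, D * mulEnd a - mulEnd a * D = mulEnd (d a))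
    (m : ℕ) :
    ncE m (L.map (D + mulEnd ·)) =
      normalSum L.length (fun k => ncE k (L.map (d + mulEnd ·)) 1) D m := by
  induction L generalizing D m with
  | nil =>
    obtain _ | m := m
    · rw [normalSum_zero, ncE_zero, ncE_zero]
      exact mulEnd_one.symm
    simp [ncE_succ_nil, normalSum, Nat.sum_antidiagonal_succ, mulEnd_zero]
  | cons a xs ih =>
    obtain _ | m := m
    · rw [normalSum_zero, ncE_zero, ncE_zero]
      exact mulEnd_one.symm
    have hD' b : D * mulEnd b = mulEnd b * D + mulEnd (d b) := by rw [← hD, add_sub_cancel]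
    have hW k : xs.length < k → ncE k (xs.map (d + mulEnd ·)) 1 = 0 := fun hk => by
      rw [ncE_eq_zero_of_length_lt (by simpa using hk)]
      rfl
    have hW' k : ncE (k + 1) ((d + mulEnd a) :: xs.map (d + mulEnd ·)) 1 =
        ncE (k + 1) (xs.map (d + mulEnd ·)) 1 +
          normalSum xs.length (fun j => ncE j (xs.map (d + mulEnd ·)) 1) d k a := by
      rw [← ih hd, ncE_succ_cons]
      show _ + ncE k (xs.map (d + mulEnd ·)) (d 1 + a * 1) = _
      rw [apply_one_eq_zero_of_sub_eq_mulEnd hd, zero_add, mul_one]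
      rfl
    rw [List.map_cons, ncE_succ_cons, ih hD, ih hD, mul_add, ← add_assoc,
      normalSum_succ_add_normalSum_mul hW, normalSum_mul_mulEnd hD']
    exact (normalSum_succ_eq_add (by rw [ncE_zero, ncE_zero]) hW' m).symm

end Ring

theorem stmt6_general {A : Type*} [CommRing A] (N : ℕ) (d : AddMonoid.End A)
    (hd : ∀ a : A, d * mulEnd a - mulEnd a * d = mulEnd (d a))
    (f : Fin N → A) (D : AddMonoid.End A)
    (hD : ∀ a : A, D * mulEnd a - mulEnd a * D = mulEnd (d a))
    (m : ℕ) :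
    ncE m (List.ofFn fun i => D + mulEnd (f i))
      = ∑ k ∈ Finset.range (m + 1),
          Nat.choose (N - k) (m - k) •
            (mulEnd ((ncE k (List.ofFn fun i => d + mulEnd (f i))) (1 : A)) * D ^ (m - k)) := by
  have h := ncE_map_add_mulEnd_eq_normalSum hd (List.ofFn f) hD m
  rwa [List.map_ofFn, List.map_ofFn, List.length_ofFn, normalSum,
    Nat.sum_antidiagonal_eq_sum_range_succ_mk] at h

/-- **Lemma 4.3** (the analogue of Molev's Proposition 12.4.4): with
`W_k := e_k(d + m_{f_1}, …, d + m_{f_N})(1)`, for any additive endomorphism `D`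
with `D ∘ m_a − m_a ∘ D = m_{d(a)}` and every `1 ≤ m ≤ N`, one has
`e_m(D + m_{f_1}, …, D + m_{f_N}) = ∑_{k=0}^{m} C(N-k, m-k) m_{W_k} ∘ D^{m-k}`. -/
theorem stmt6 {A : Type*} [CommRing A] (N : ℕ) (d : AddMonoid.End A)
    (hd : ∀ a : A, d * mulEnd a - mulEnd a * d = mulEnd (d a))
    (f : Fin N → A) (D : AddMonoid.End A)
    (hD : ∀ a : A, D * mulEnd a - mulEnd a * D = mulEnd (d a))
    (m : ℕ) (hm1 : 1 ≤ m) (hm : m ≤ N) :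
    ncE m (List.ofFn fun i => D + mulEnd (f i))
      = ∑ k ∈ Finset.range (m + 1),
          Nat.choose (N - k) (m - k) •
            (mulEnd ((ncE k (List.ofFn fun i => d + mulEnd (f i))) (1 : A)) * D ^ (m - k)) :=
  stmt6_general N d hd f D hD m
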